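/- arXiv:1812.00081 — 2 statements merged into one kernel-verified Lean document; each statement's English description precedes it below -/
import Mathlib

section
/- Let ρ' be the symmetric measure with dρ'(x,y) = q(x)q(y) dρ(x,y) for a positive Borel function q, and let Δ, Δ' be the Laplacians Δ(f)(x)=∫(f(x)−f(y)) dρ_x(y), Δ'(f)(x)=∫(f(x)−f(y)) dρ'_x(y). Then Δ'(f) = c·q·f·(P(q)−q) + q·Δ(q·f); in particular, if P(q)=q then Δ'(f) = q·Δ(q·f). -/
open MeasureTheory
open scoped ENNReal

/-!
Both sides are affine in the three numbers `∫ q`, `∫ q f` and `c = ρ_x(V)`: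
`Δ'(f)(x) = q(x) (f(x) ∫ q - ∫ q f)` and `q(x) Δ(q f)(x) = q(x) (c q(x) f(x) - ∫ q f)`,
so their difference is `q(x) f(x) (∫ q - c q(x)) = c q(x) f(x) (P(q)(x) - q(x))`.
-/

namespace MeasureTheory

variable {V : Type*} [MeasurableSpace V] {μ : Measure V}

lemma isFiniteMeasure_of_toReal_measure_univ_ne_zero (h : (μ Set.univ).toReal ≠ 0) :
    IsFiniteMeasure μ :=
  ⟨lt_top_iff_ne_top.2 (ENNReal.toReal_ne_zero.1 h).2⟩

lemma integral_sub_mul_const_mul {q f : V → ℝ} (hq : Integrable q μ)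
    (hqf : Integrable (fun y => q y * f y) μ) (a b : ℝ) :
    ∫ y, (a - f y) * (b * q y) ∂μ = b * (a * ∫ y, q y ∂μ - ∫ y, q y * f y ∂μ) := by
  have hexpand : ∀ y, (a - f y) * (b * q y) = b * a * q y - b * (q y * f y) := fun y => by ring
  simp_rw [hexpand]
  rw [integral_sub (hq.const_mul _) (hqf.const_mul _), integral_const_mul, integral_const_mul]
  ring

lemma integral_const_sub_of_integrable [IsFiniteMeasure μ] {g : V → ℝ} (hg : Integrable g μ)
    (a : ℝ) : ∫ y, (a - g y) ∂μ = (μ Set.univ).toReal * a - ∫ y, g y ∂μ := by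
  rw [integral_sub (integrable_const a) hg, integral_const, smul_eq_mul, measureReal_def]

end MeasureTheory

theorem laplacian_of_equivalent_measure_general
    {V : Type*} [MeasurableSpace V]
    (κ : V → Measure V) (q f : V → ℝ) (x : V)
    (hc0 : (κ x Set.univ).toReal ≠ 0)
    (hq : Integrable q (κ x))
    (hqf : Integrable (fun y => q y * f y) (κ x)) :
    (∫ y, (f x - f y) * (q x * q y) ∂(κ x)
      = (κ x Set.univ).toReal * q x * f x
          * (((κ x Set.univ).toReal)⁻¹ * ∫ y, q y ∂(κ x) - q x)
        + q x * ∫ y, (q x * f x - q y * f y) ∂(κ x))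
    ∧ (((κ x Set.univ).toReal)⁻¹ * ∫ y, q y ∂(κ x) = q x →
        ∫ y, (f x - f y) * (q x * q y) ∂(κ x)
          = q x * ∫ y, (q x * f x - q y * f y) ∂(κ x)) := by
  have := isFiniteMeasure_of_toReal_measure_univ_ne_zero hc0
  have hdecomp : ∫ y, (f x - f y) * (q x * q y) ∂(κ x)
      = (κ x Set.univ).toReal * q x * f x
          * (((κ x Set.univ).toReal)⁻¹ * ∫ y, q y ∂(κ x) - q x)
        + q x * ∫ y, (q x * f x - q y * f y) ∂(κ x) := by
    rw [integral_sub_mul_const_mul hq hqf, integral_const_sub_of_integrable hqf]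
    field_simp
    ring
  refine ⟨hdecomp, fun hharmonic => ?_⟩
  rw [hdecomp, hharmonic, sub_self, mul_zero, zero_add]

/-- With dρ'_x(y) = q(x)q(y) dρ_x(y), the Laplacians satisfy
Δ'(f) = c·q·f·(P(q) − q) + q·Δ(q·f); in particular, if P(q) = q then Δ'(f) = q·Δ(q·f).
Here Δ(g)(x) = ∫(g(x) − g(y)) dρ_x(y), c(x) = ρ_x(V), P(g)(x) = c(x)⁻¹ ∫ g dρ_x. -/
theorem laplacian_of_equivalent_measure
    {V : Type*} [MeasurableSpace V]
    (κ : V → Measure V) (q f : V → ℝ) (x : V)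
    (hfin : κ x Set.univ ≠ ⊤)
    (hc0 : (κ x Set.univ).toReal ≠ 0)
    (hq : Integrable q (κ x))
    (hf : Integrable f (κ x))
    (hqf : Integrable (fun y => q y * f y) (κ x)) :
    (∫ y, (f x - f y) * (q x * q y) ∂(κ x)
      = (κ x Set.univ).toReal * q x * f x
          * (((κ x Set.univ).toReal)⁻¹ * ∫ y, q y ∂(κ x) - q x)
        + q x * ∫ y, (q x * f x - q y * f y) ∂(κ x))
    ∧ (((κ x Set.univ).toReal)⁻¹ * ∫ y, q y ∂(κ x) = q x →
        ∫ y, (f x - f y) * (q x * q y) ∂(κ x)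
          = q x * ∫ y, (q x * f x - q y * f y) ∂(κ x)) :=
  laplacian_of_equivalent_measure_general κ q f x hc0 hq hqf
end

section
/- Let ρ be a symmetric irreducible measure on V×V and consider the graph whose vertices are measurable sets of finite positive μ-measure, with an edge between A and B iff ρ(A×B) > 0. Then any two such sets A, B are connected by a finite path: there exist A_0=A, A_1, …, A_n with ρ(A_i × A_{i+1}) > 0 for all i and ρ(A_n × B) > 0. -/
open MeasureTheory
open scoped ENNReal

/-- Iterated kernel: k⁰(x,A) = χ_A(x), kⁿ⁺¹(x,A) = ∫ kⁿ(y,A) dk(x,y). -/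
noncomputable def kiter {V : Type*} [MeasurableSpace V] (κ : V → Measure V) :
    ℕ → V → Set V → ℝ≥0∞
  | 0, x, A => Set.indicator A (fun _ => (1 : ℝ≥0∞)) x
  | n + 1, x, A => ∫⁻ y, kiter κ n y A ∂(κ x)

/-!
If `kiter κ (n + 1) x B > 0` for every `x ∈ A`, then each such `x` gives positive `κ x`-mass to
the set `Rₙ` where `kiter κ n · B > 0`, so integrating over `A` gives `ρ(A × Rₙ) > 0`. By
σ-finiteness a piece `C ⊆ Rₙ` of finite measure still has `ρ(A × C) > 0`, and symmetry of `ρ`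
forces `μ C > 0`: `C` is a vertex adjacent to `A`, and induction on `n` yields a path ending next
to `R₀ = B`. Irreducibility provides an `n` for which the points of `A` with
`kiter κ (n + 1) x B > 0` have positive measure, and they form the first vertex after `A`.
-/

section

open Set

universe u

variable {V : Type u} [MeasurableSpace V]

section Chains

variable (μ : Measure V) (ρ : Measure (V × V))

def JoinedByChain (A B : Set V) : Prop :=
  ∃ (n : ℕ) (F : ℕ → Set V),
    F 0 = A
    ∧ (∀ i, MeasurableSet (F i))
    ∧ (∀ i ≤ n, 0 < μ (F i) ∧ μ (F i) < ⊤)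
    ∧ (∀ i < n, 0 < ρ (F i ×ˢ F (i + 1)))
    ∧ 0 < ρ (F n ×ˢ B)

variable {μ ρ} {A B C : Set V}

theorem joinedByChain_of_pos (hA : MeasurableSet A) (hA0 : 0 < μ A) (hAfin : μ A < ⊤)
    (hAB : 0 < ρ (A ×ˢ B)) : JoinedByChain μ ρ A B :=
  ⟨0, fun _ => A, rfl, fun _ => hA, fun _ _ => ⟨hA0, hAfin⟩, fun _ h => absurd h (Nat.not_lt_zero _),
    hAB⟩

theorem JoinedByChain.cons (hA : MeasurableSet A) (hA0 : 0 < μ A) (hAfin : μ A < ⊤)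
    (hAC : 0 < ρ (A ×ˢ C)) (h : JoinedByChain μ ρ C B) : JoinedByChain μ ρ A B := by
  obtain ⟨n, F, hF0, hFm, hFpos, hFedge, hFend⟩ := h
  refine ⟨n + 1, fun i => Nat.casesOn i A F, rfl, ?_, ?_, ?_, hFend⟩
  · rintro (_ | i)
    exacts [hA, hFm i]
  · rintro (_ | i) hi
    exacts [⟨hA0, hAfin⟩, hFpos i (Nat.succ_le_succ_iff.mp hi)]
  · rintro (_ | i) hi
    exacts [show 0 < ρ (A ×ˢ F 0) by rwa [hF0], hFedge i (Nat.succ_lt_succ_iff.mp hi)]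

theorem JoinedByChain.mono_left {A' : Set V} (h : JoinedByChain μ ρ A' B) (hA'A : A' ⊆ A)
    (hA : MeasurableSet A) (hA0 : 0 < μ A) (hAfin : μ A < ⊤) : JoinedByChain μ ρ A B := by
  obtain ⟨n, F, hF0, hFm, hFpos, hFedge, hFend⟩ := h
  have hF0A : F 0 ⊆ A := hF0 ▸ hA'A
  refine ⟨n, Function.update F 0 A, by simp, ?_, ?_, ?_, ?_⟩
  · intro i
    rcases eq_or_ne i 0 with rfl | hi
    · simpa using hA
    · simpa [hi] using hFm i
  · intro i hin
    rcases eq_or_ne i 0 with rfl | hi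
    · simpa using ⟨hA0, hAfin⟩
    · simpa [hi] using hFpos i hin
  · intro i hin
    rcases eq_or_ne i 0 with rfl | hi
    · simpa using (hFedge 0 hin).trans_le (measure_mono (prod_mono hF0A le_rfl))
    · simpa [hi] using hFedge i hin
  · rcases eq_or_ne n 0 with rfl | hn
    · simpa using hFend.trans_le (measure_mono (prod_mono hF0A le_rfl))
    · simpa [hn] using hFend

end Chains

section Kernel

variable {κ : V → Measure V}

theorem measurable_kiter (hκ : Measurable κ) (n : ℕ) {B : Set V} (hB : MeasurableSet B) :
    Measurable fun x => kiter κ n x B := by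
  induction n with
  | zero => exact measurable_one.indicator hB
  | succ n ih => exact (Measure.measurable_lintegral ih).comp hκ

theorem setOf_kiter_zero_pos (B : Set V) : {x | 0 < kiter κ 0 x B} = B := by
  ext x
  by_cases hx : x ∈ B <;> simp [kiter, hx]

theorem kiter_succ_pos_iff (hκ : Measurable κ) (n : ℕ) {B : Set V} (hB : MeasurableSet B)
    (x : V) : 0 < kiter κ (n + 1) x B ↔ 0 < κ x {y | 0 < kiter κ n y B} := by
  simp only [kiter, lintegral_pos_iff_support (measurable_kiter hκ n hB), Function.support,
    pos_iff_ne_zero]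

end Kernel

theorem exists_pos_prod_inter_spanningSets (μ : Measure V) [SigmaFinite μ]
    (ρ : Measure (V × V)) {A C : Set V} (h : 0 < ρ (A ×ˢ C)) :
    ∃ k, 0 < ρ (A ×ˢ (C ∩ spanningSets μ k)) := by
  contrapose! h
  rw [← inter_univ C, ← iUnion_spanningSets μ, inter_iUnion, prod_iUnion]
  exact (measure_iUnion_null fun k => nonpos_iff_eq_zero.mp (h k)).le

section Graph

variable {μ : Measure V} {ρ : Measure (V × V)} {κ : V → Measure V} {A B C : Set V}

theorem measure_pos_of_prod_pos
    (hdis : ∀ A B : Set V, MeasurableSet A → MeasurableSet B →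
      ρ (A ×ˢ B) = ∫⁻ x in A, κ x B ∂μ)
    (hsym : ∀ A B : Set V, MeasurableSet A → MeasurableSet B →
      ρ (A ×ˢ B) = ρ (B ×ˢ A))
    (hA : MeasurableSet A) (hC : MeasurableSet C) (h : 0 < ρ (A ×ˢ C)) : 0 < μ C := by
  rw [hsym A C hA hC, hdis C A hC hA] at h
  exact pos_iff_ne_zero.mpr fun hC0 => by simp [Measure.restrict_eq_zero.mpr hC0] at h

theorem prod_pos_of_forall_pos
    (hmeas : ∀ B : Set V, MeasurableSet B → Measurable fun x => κ x B)
    (hdis : ∀ A B : Set V, MeasurableSet A → MeasurableSet B →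
      ρ (A ×ˢ B) = ∫⁻ x in A, κ x B ∂μ)
    (hA : MeasurableSet A) (hA0 : 0 < μ A) (hC : MeasurableSet C) (h : ∀ x ∈ A, 0 < κ x C) :
    0 < ρ (A ×ˢ C) := by
  rw [hdis A C hA hC, setLIntegral_pos_iff (hmeas C hC)]
  exact hA0.trans_le (measure_mono fun x hx => ⟨(h x hx).ne', hx⟩)

theorem exists_subset_finite_measure_prod_pos [SigmaFinite μ]
    (hdis : ∀ A B : Set V, MeasurableSet A → MeasurableSet B →
      ρ (A ×ˢ B) = ∫⁻ x in A, κ x B ∂μ)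
    (hsym : ∀ A B : Set V, MeasurableSet A → MeasurableSet B →
      ρ (A ×ˢ B) = ρ (B ×ˢ A))
    (hA : MeasurableSet A) (hC : MeasurableSet C) (h : 0 < ρ (A ×ˢ C)) :
    ∃ C' ⊆ C, MeasurableSet C' ∧ 0 < μ C' ∧ μ C' < ⊤ ∧ 0 < ρ (A ×ˢ C') := by
  obtain ⟨k, hk⟩ := exists_pos_prod_inter_spanningSets μ ρ h
  have hC' : MeasurableSet (C ∩ spanningSets μ k) := hC.inter (measurableSet_spanningSets μ k)
  exact ⟨_, inter_subset_left, hC', measure_pos_of_prod_pos hdis hsym hA hC' hk,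
    (measure_mono inter_subset_right).trans_lt (measure_spanningSets_lt_top μ k), hk⟩

theorem joinedByChain_of_forall_kiter_pos [SigmaFinite μ]
    (hmeas : ∀ B : Set V, MeasurableSet B → Measurable fun x => κ x B)
    (hdis : ∀ A B : Set V, MeasurableSet A → MeasurableSet B →
      ρ (A ×ˢ B) = ∫⁻ x in A, κ x B ∂μ)
    (hsym : ∀ A B : Set V, MeasurableSet A → MeasurableSet B →
      ρ (A ×ˢ B) = ρ (B ×ˢ A))
    (hB : MeasurableSet B) (n : ℕ) (hA : MeasurableSet A) (hA0 : 0 < μ A) (hAfin : μ A < ⊤)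
    (hAB : ∀ x ∈ A, 0 < kiter κ (n + 1) x B) : JoinedByChain μ ρ A B := by
  have hκ : Measurable κ := Measure.measurable_of_measurable_coe κ hmeas
  induction n generalizing A with
  | zero =>
    refine joinedByChain_of_pos hA hA0 hAfin (prod_pos_of_forall_pos hmeas hdis hA hA0 hB ?_)
    intro x hx
    simpa only [kiter_succ_pos_iff hκ 0 hB, setOf_kiter_zero_pos] using hAB x hx
  | succ n ih =>
    have hR : MeasurableSet {y | 0 < kiter κ (n + 1) y B} :=
      measurableSet_lt measurable_const (measurable_kiter hκ (n + 1) hB)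
    have hAR : 0 < ρ (A ×ˢ {y | 0 < kiter κ (n + 1) y B}) :=
      prod_pos_of_forall_pos hmeas hdis hA hA0 hR fun x hx =>
        (kiter_succ_pos_iff hκ (n + 1) hB x).mp (hAB x hx)
    obtain ⟨C, hCR, hC, hC0, hCfin, hAC⟩ :=
      exists_subset_finite_measure_prod_pos hdis hsym hA hR hAR
    exact (ih hC hC0 hCfin hCR).cons hA hA0 hAfin hAC

theorem exists_measure_inter_kiter_pos (hB : ∀ᵐ x ∂μ, ∃ n : ℕ, 1 ≤ n ∧ 0 < kiter κ n x B)
    (hA0 : 0 < μ A) : ∃ n, 0 < μ (A ∩ {x | 0 < kiter κ (n + 1) x B}) := by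
  by_contra! h
  have hnull : ∀ᵐ x ∂μ, ∀ n, x ∉ A ∩ {x | 0 < kiter κ (n + 1) x B} :=
    ae_all_iff.mpr fun n => measure_eq_zero_iff_ae_notMem.mp (nonpos_iff_eq_zero.mp (h n))
  refine hA0.ne' (measure_eq_zero_iff_ae_notMem.mpr ?_)
  filter_upwards [hnull, hB] with x hx ⟨m, hm1, hm⟩ hxA
  obtain ⟨n, rfl⟩ := Nat.exists_eq_add_of_le' hm1
  exact hx n ⟨hxA, hm⟩

theorem graph_of_finite_measure_sets_connected_general
    {V : Type*} [MeasurableSpace V] (μ : Measure V) [SigmaFinite μ]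
    (ρ : Measure (V × V)) (κ : V → Measure V)
    (hmeas : ∀ B : Set V, MeasurableSet B → Measurable fun x => κ x B)
    (hdis : ∀ A B : Set V, MeasurableSet A → MeasurableSet B →
      ρ (A ×ˢ B) = ∫⁻ x in A, κ x B ∂μ)
    (hsym : ∀ A B : Set V, MeasurableSet A → MeasurableSet B →
      ρ (A ×ˢ B) = ρ (B ×ˢ A))
    (hirr : ∀ B : Set V, MeasurableSet B → 0 < μ B →
      ∀ᵐ x ∂μ, ∃ n : ℕ, 1 ≤ n ∧ 0 < kiter κ n x B)
    (A B : Set V)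
    (hA : MeasurableSet A) (hA0 : 0 < μ A) (hAfin : μ A < ⊤)
    (hB : MeasurableSet B) (hB0 : 0 < μ B) :
    ∃ (n : ℕ) (F : ℕ → Set V),
      F 0 = A
      ∧ (∀ i, MeasurableSet (F i))
      ∧ (∀ i ≤ n, 0 < μ (F i) ∧ μ (F i) < ⊤)
      ∧ (∀ i < n, 0 < ρ (F i ×ˢ F (i + 1)))
      ∧ 0 < ρ (F n ×ˢ B) := by
  have hκ : Measurable κ := Measure.measurable_of_measurable_coe κ hmeas
  obtain ⟨n, hn⟩ := exists_measure_inter_kiter_pos (hirr B hB hB0) hA0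
  have hD : MeasurableSet (A ∩ {x | 0 < kiter κ (n + 1) x B}) :=
    hA.inter (measurableSet_lt measurable_const (measurable_kiter hκ (n + 1) hB))
  exact (joinedByChain_of_forall_kiter_pos hmeas hdis hsym hB n hD hn
    ((measure_mono Set.inter_subset_left).trans_lt hAfin) fun x hx => hx.2).mono_left
    Set.inter_subset_left hA hA0 hAfin

/-- For a symmetric irreducible measure ρ on V × V, the graph whose vertices
are the measurable sets of finite positive μ-measure, with an edge between A and B iff
ρ(A×B) > 0, is connected: any two such sets A, B are joined by a finite path
A = A_0, A_1, …, A_n with ρ(A_i × A_{i+1}) > 0 for all i and ρ(A_n × B) > 0. -/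
theorem graph_of_finite_measure_sets_connected
    {V : Type*} [MeasurableSpace V] (μ : Measure V) [SigmaFinite μ]
    (ρ : Measure (V × V)) (κ : V → Measure V)
    (hmeas : ∀ B : Set V, MeasurableSet B → Measurable fun x => κ x B)
    (hdis : ∀ A B : Set V, MeasurableSet A → MeasurableSet B →
      ρ (A ×ˢ B) = ∫⁻ x in A, κ x B ∂μ)
    (hsym : ∀ A B : Set V, MeasurableSet A → MeasurableSet B →
      ρ (A ×ˢ B) = ρ (B ×ˢ A))
    (hcloc : ∀ A : Set V, MeasurableSet A → μ A < ⊤ →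
      ∫⁻ x in A, κ x Set.univ ∂μ < ⊤)
    (hirr : ∀ B : Set V, MeasurableSet B → 0 < μ B →
      ∀ᵐ x ∂μ, ∃ n : ℕ, 1 ≤ n ∧ 0 < kiter κ n x B)
    (A B : Set V)
    (hA : MeasurableSet A) (hA0 : 0 < μ A) (hAfin : μ A < ⊤)
    (hB : MeasurableSet B) (hB0 : 0 < μ B) (hBfin : μ B < ⊤) :
    ∃ (n : ℕ) (F : ℕ → Set V),
      F 0 = A
      ∧ (∀ i, MeasurableSet (F i))
      ∧ (∀ i ≤ n, 0 < μ (F i) ∧ μ (F i) < ⊤)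
      ∧ (∀ i < n, 0 < ρ (F i ×ˢ F (i + 1)))
      ∧ 0 < ρ (F n ×ˢ B) :=
  graph_of_finite_measure_sets_connected_general μ ρ κ hmeas hdis hsym hirr A B hA hA0 hAfin hB hB0
end Graph
end
end
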